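/- arXiv:2510.08376 — 2 statements merged into one kernel-verified Lean document; each statement's English description precedes it below -/
import Mathlib

section
/- For each noncentral element x of G = A(n,θ), the set [x,G] = {[x,g] : g ∈ G} is a subgroup of Z(G) of index 2 in Z(G) (a hyperplane of Z(G) viewed as an F_2-vector space). -/
noncomputable section

abbrev Fq (n : ℕ) : Type := GaloisField 2 n

instance (n : ℕ) : Fintype (Fq n) := Fintype.ofFinite _

@[ext] structure SuzukiA (n : ℕ) (θ : Fq n ≃+* Fq n) where
  a : Fq n
  b : Fq n

namespace SuzukiA

variable {n : ℕ} {θ : Fq n ≃+* Fq n}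

instance : Mul (SuzukiA n θ) := ⟨fun x y => ⟨x.a + y.a, x.b + y.b + x.a * θ y.a⟩⟩
instance : One (SuzukiA n θ) := ⟨⟨0, 0⟩⟩
instance : Inv (SuzukiA n θ) := ⟨fun x => ⟨x.a, x.b + x.a * θ x.a⟩⟩

theorem mul_def (x y : SuzukiA n θ) :
    x * y = ⟨x.a + y.a, x.b + y.b + x.a * θ y.a⟩ := rfl

@[simp] theorem one_a : (1 : SuzukiA n θ).a = 0 := rfl
@[simp] theorem one_b : (1 : SuzukiA n θ).b = 0 := rfl

instance : Group (SuzukiA n θ) where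
  mul_assoc x y z := by ext <;> simp [mul_def, map_add] <;> ring
  one_mul x := by ext <;> simp [mul_def]
  mul_one x := by ext <;> simp [mul_def]
  inv_mul_cancel x := by
    have h2 : (2 : Fq n) = 0 := by
      have := CharP.cast_eq_zero (Fq n) 2
      exact_mod_cast this
    show (⟨x.a, x.b + x.a * θ x.a⟩ * x : SuzukiA n θ) = 1
    ext
    · show x.a + x.a = 0
      linear_combination x.a * h2
    · show x.b + x.a * θ x.a + x.b + x.a * θ x.a = 0
      linear_combination (x.b + x.a * θ x.a) * h2

instance : Fintype (SuzukiA n θ) :=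
  Fintype.ofEquiv (Fq n × Fq n)
    { toFun := fun p => ⟨p.1, p.2⟩
      invFun := fun x => (x.a, x.b)
      left_inv := fun _ => rfl
      right_inv := fun _ => rfl }

end SuzukiA

/-!
The commutator `x⁻¹ g⁻¹ x g` is the central element `(0, φ g.a)`, where
`φ c = a θ(c) + c θ(a)` with `a = x.a` is additive. For `a ≠ 0`, `φ c = 0` says that `c / a` is
fixed by `θ`, hence by the Frobenius, which is a power of `θ`; so `ker φ = {0, a}`. The
commutators of `x` therefore form the image of `φ`, of index `|ker φ| = 2` in
`Z(G) = {(0, b)}`. The same kernel computation identifies the centre as soon as the field has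
more than two elements, which the existence of a noncentral `x` guarantees.
-/

theorem pow_eq_self_of_apply_eq_self {R : Type*} [CommSemiring R] {p : ℕ} [ExpChar R p]
    [PerfectRing R p] {θ : R ≃+* R} (hθ : frobeniusEquiv R p ∈ Subgroup.zpowers θ) {t : R}
    (ht : θ t = t) : t ^ p = t := by
  have hstab : θ ∈ MulAction.stabilizer (RingAut R) t := ht
  have := (Subgroup.zpowers_le.mpr hstab) hθ
  simpa [MulAction.mem_stabilizer_iff, RingAut.smul_def, frobeniusEquiv_apply, frobenius_def]
    using this

section CommutatorForm

variable {K : Type*} [Field K]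

variable (θ : K ≃+* K)

def commutatorForm (w : K) : K →+ K where
  toFun c := w * θ c + c * θ w
  map_zero' := by simp
  map_add' c d := by simp only [map_add]; ring

@[simp] theorem commutatorForm_apply (w c : K) : commutatorForm θ w c = w * θ c + c * θ w := rfl

variable [CharP K 2]

theorem commutatorForm_self (w : K) : commutatorForm θ w w = 0 := CharTwo.add_self_eq_zero _

variable {θ} [PerfectRing K 2]

theorem commutatorForm_eq_zero_iff (hθ : frobeniusEquiv K 2 ∈ Subgroup.zpowers θ) {w : K}
    (hw : w ≠ 0) {c : K} : commutatorForm θ w c = 0 ↔ c = 0 ∨ c = w := by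
  constructor
  · intro hc
    have hfix : θ (c / w) = c / w := by
      have hθw : θ w ≠ 0 := by simpa using hw
      rw [commutatorForm_apply, CharTwo.add_eq_zero] at hc
      rw [map_div₀, div_eq_div_iff hθw hw, mul_comm, hc]
    have hidem : IsIdempotentElem (c / w) :=
      (sq (c / w)).symm.trans (pow_eq_self_of_apply_eq_self hθ hfix)
    rcases IsIdempotentElem.iff_eq_zero_or_one.mp hidem with h | h
    · exact Or.inl (by simpa [hw] using h)
    · exact Or.inr ((div_eq_one_iff_eq hw).mp h)
  · rintro (rfl | rfl)
    · simp
    · exact commutatorForm_self θ _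

variable [Finite K]

theorem index_range_commutatorForm (hθ : frobeniusEquiv K 2 ∈ Subgroup.zpowers θ) {w : K}
    (hw : w ≠ 0) : (commutatorForm θ w).range.index = 2 := by
  have hker : ((commutatorForm θ w).ker : Set K) = {0, w} := by
    ext c
    rw [SetLike.mem_coe, AddMonoidHom.mem_ker, commutatorForm_eq_zero_iff hθ hw]
    rfl
  rw [AddSubgroup.index_range, ← SetLike.coe_sort_coe, hker, Nat.card_coe_set_eq,
    Set.ncard_pair hw.symm]

end CommutatorForm

namespace SuzukiA

variable {n : ℕ} {θ : Fq n ≃+* Fq n}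

theorem inv_def (x : SuzukiA n θ) : x⁻¹ = ⟨x.a, x.b + x.a * θ x.a⟩ := rfl

theorem commutator_eq (x g : SuzukiA n θ) :
    x⁻¹ * g⁻¹ * x * g = ⟨0, commutatorForm θ x.a g.a⟩ := by
  ext <;> simp only [mul_def, inv_def, commutatorForm_apply] <;> grind

theorem mul_comm_iff (x g : SuzukiA n θ) : x * g = g * x ↔ commutatorForm θ x.a g.a = 0 := by
  have hcomm : (g * x)⁻¹ * (x * g) = x⁻¹ * g⁻¹ * x * g := by group
  rw [eq_comm, ← inv_mul_eq_one, hcomm, commutator_eq, SuzukiA.ext_iff]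
  simp

theorem two_lt_card_of_notMem_center {x : SuzukiA n θ}
    (hx : x ∉ Subgroup.center (SuzukiA n θ)) : 2 < Fintype.card (Fq n) := by
  obtain ⟨g, hg⟩ : ∃ g : SuzukiA n θ, ¬x * g = g * x := by
    simpa [Subgroup.mem_center_iff, eq_comm] using hx
  rw [mul_comm_iff] at hg
  refine Fintype.two_lt_card_iff.mpr ⟨0, x.a, g.a, ?_, ?_, ?_⟩
  · intro hx0
    simp [← hx0] at hg
  · intro hg0
    simp [← hg0] at hg
  · intro hxg
    exact hg (hxg ▸ commutatorForm_self θ _)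

theorem mem_center_iff (hθ : frobeniusEquiv (Fq n) 2 ∈ Subgroup.zpowers θ)
    (hcard : 2 < Fintype.card (Fq n)) {z : SuzukiA n θ} :
    z ∈ Subgroup.center (SuzukiA n θ) ↔ z.a = 0 := by
  simp only [Subgroup.mem_center_iff, eq_comm (a := _ * z), mul_comm_iff]
  refine ⟨fun hz => ?_, fun hz g => by simp [hz]⟩
  by_contra ha
  have hker (c : Fq n) : c = 0 ∨ c = z.a :=
    (commutatorForm_eq_zero_iff hθ ha).mp (hz ⟨c, 0⟩)
  obtain ⟨a, b, c, hab, hac, hbc⟩ := Fintype.two_lt_card_iff.mp hcard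
  rcases hker a with rfl | rfl <;> rcases hker b with rfl | rfl <;> rcases hker c with h | h <;>
    simp_all

def centralHom : Multiplicative (Fq n) →* SuzukiA n θ where
  toFun b := ⟨0, b.toAdd⟩
  map_one' := rfl
  map_mul' b c := by ext <;> simp [mul_def]

theorem centralHom_injective : Function.Injective (centralHom (θ := θ)) :=
  fun _ _ h => congrArg SuzukiA.b h

theorem center_eq_range_centralHom (hθ : frobeniusEquiv (Fq n) 2 ∈ Subgroup.zpowers θ)
    (hcard : 2 < Fintype.card (Fq n)) :
    Subgroup.center (SuzukiA n θ) = (centralHom (θ := θ)).range := by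
  ext z
  rw [mem_center_iff hθ hcard, MonoidHom.mem_range]
  exact ⟨fun hz => ⟨.ofAdd z.b, SuzukiA.ext hz.symm rfl⟩, by rintro ⟨b, rfl⟩; rfl⟩

def commutatorHom (x : SuzukiA n θ) : Multiplicative (Fq n) →* SuzukiA n θ :=
  centralHom.comp (commutatorForm θ x.a).toMultiplicative

theorem coe_range_commutatorHom (x : SuzukiA n θ) :
    ((commutatorHom x).range : Set (SuzukiA n θ)) = {z | ∃ g, z = x⁻¹ * g⁻¹ * x * g} := by
  ext z
  simp only [MonoidHom.coe_range, Set.mem_range, Set.mem_ofPred_eq, commutator_eq]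
  exact ⟨fun ⟨c, hc⟩ => ⟨⟨c.toAdd, 0⟩, hc.symm⟩, fun ⟨g, hg⟩ => ⟨.ofAdd g.a, hg.symm⟩⟩

theorem relIndex_range_commutatorHom (hθ : frobeniusEquiv (Fq n) 2 ∈ Subgroup.zpowers θ)
    {x : SuzukiA n θ} (hx : x.a ≠ 0) :
    (commutatorHom x).range.relIndex (centralHom (θ := θ)).range = 2 := by
  rw [commutatorHom, MonoidHom.range_comp, MonoidHom.range_eq_map centralHom,
    Subgroup.relIndex_map_map_of_injective _ _ centralHom_injective, Subgroup.relIndex_top_right,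
    MonoidHom.coe_toMultiplicative_range, AddSubgroup.index_toSubgroup]
  exact index_range_commutatorForm hθ hx

end SuzukiA

open SuzukiA in
theorem stmt9_general (n : ℕ) (θ : Fq n ≃+* Fq n)
    (hθ : ∀ σ : Fq n ≃+* Fq n, σ ∈ Subgroup.zpowers θ)
    (x : SuzukiA n θ) (hx : x ∉ Subgroup.center (SuzukiA n θ)) :
    (↑(Subgroup.closure {z : SuzukiA n θ | ∃ g, z = x⁻¹ * g⁻¹ * x * g}) =
      {z : SuzukiA n θ | ∃ g, z = x⁻¹ * g⁻¹ * x * g}) ∧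
    Subgroup.closure {z : SuzukiA n θ | ∃ g, z = x⁻¹ * g⁻¹ * x * g} ≤
      Subgroup.center (SuzukiA n θ) ∧
    (Subgroup.closure {z : SuzukiA n θ | ∃ g, z = x⁻¹ * g⁻¹ * x * g}).relIndex
      (Subgroup.center (SuzukiA n θ)) = 2 := by
  have hfrob := hθ (frobeniusEquiv (Fq n) 2)
  have hcard := two_lt_card_of_notMem_center hx
  have hxa : x.a ≠ 0 := fun h => hx ((mem_center_iff hfrob hcard).mpr h)
  rw [← coe_range_commutatorHom, Subgroup.closure_eq, center_eq_range_centralHom hfrob hcard]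
  exact ⟨rfl, (MonoidHom.range_comp _ _).trans_le (Subgroup.map_le_range _ _),
    relIndex_range_commutatorHom hfrob hxa⟩

open SuzukiA in
theorem stmt9 (n : ℕ) (hn : 1 < n) (hodd : Odd n) (θ : Fq n ≃+* Fq n)
    (hθ : ∀ σ : Fq n ≃+* Fq n, σ ∈ Subgroup.zpowers θ)
    (x : SuzukiA n θ) (hx : x ∉ Subgroup.center (SuzukiA n θ)) :
    (↑(Subgroup.closure {z : SuzukiA n θ | ∃ g, z = x⁻¹ * g⁻¹ * x * g}) =
      {z : SuzukiA n θ | ∃ g, z = x⁻¹ * g⁻¹ * x * g}) ∧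
    Subgroup.closure {z : SuzukiA n θ | ∃ g, z = x⁻¹ * g⁻¹ * x * g} ≤
      Subgroup.center (SuzukiA n θ) ∧
    (Subgroup.closure {z : SuzukiA n θ | ∃ g, z = x⁻¹ * g⁻¹ * x * g}).relIndex
      (Subgroup.center (SuzukiA n θ)) = 2 :=
  stmt9_general n θ hθ x hx
end
end

section
/- No element of order 4 in G = A(n,θ) is conjugate to its inverse. -/
noncomputable section

/-!
If `y x = x⁻¹ y` with `x = (a, b)`, `a ≠ 0`, comparing second coordinates gives
`y.a θ(a) + a θ(y.a) = a θ(a)`, i.e. `t = y.a / a` satisfies `θ t = t + 1`. Iterating, `θⁿ t = t + n`;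
since every automorphism of `F_{2^n}` has order dividing `n`, this forces `n = 0` in characteristic
`2`, contradicting that `n` is odd.
-/

theorem GaloisField.ringEquiv_pow_eq_one {p : ℕ} [Fact p.Prime] {n : ℕ} (hn : n ≠ 0)
    (σ : GaloisField p n ≃+* GaloisField p n) : σ ^ n = 1 := by
  let σ' : GaloisField p n ≃ₐ[ZMod p] GaloisField p n :=
    AlgEquiv.ofRingEquiv (f := σ) fun r =>
      RingHom.congr_fun (RingHom.ext_zmod (σ.toRingHom.comp (algebraMap _ _)) (algebraMap _ _)) r
  have hcard : Nat.card (GaloisField p n ≃ₐ[ZMod p] GaloisField p n) = n := by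
    rw [IsGalois.card_aut_eq_finrank, GaloisField.finrank p hn]
  have hσ' : σ' ^ n = 1 := by
    have := pow_card_eq_one' (x := σ')
    rwa [hcard] at this
  ext t
  rw [RingAut.coe_pow]
  change σ'^[n] t = t
  rw [← AlgEquiv.coe_pow, hσ']
  rfl

theorem RingEquiv.pow_apply_eq_add_natCast {R : Type*} [Semiring R] {σ : R ≃+* R} {t : R}
    (h : σ t = t + 1) (k : ℕ) : (σ ^ k) t = t + k := by
  induction k with
  | zero => simp
  | succ k ih => rw [pow_succ', RingAut.mul_apply, ih, map_add, map_natCast, h]; push_cast; abel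

theorem RingEquiv.natCast_eq_zero_of_apply_eq_add_one {R : Type*} [Ring R] {σ : R ≃+* R} {t : R}
    (h : σ t = t + 1) {n : ℕ} (hn : σ ^ n = 1) : (n : R) = 0 := by
  have := σ.pow_apply_eq_add_natCast h n
  rwa [hn, RingAut.one_apply, left_eq_add] at this

namespace SuzukiA

variable {n : ℕ} {θ : Fq n ≃+* Fq n}

theorem mul_self_eq_one_of_a_eq_zero {x : SuzukiA n θ} (h : x.a = 0) : x * x = 1 := by
  ext <;> simp [mul_def, h, CharTwo.add_self_eq_zero]

theorem a_ne_zero_of_orderOf_eq_four {x : SuzukiA n θ} (h : orderOf x = 4) : x.a ≠ 0 := by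
  intro ha
  have : orderOf x ∣ 2 := orderOf_dvd_of_pow_eq_one (by rw [sq, mul_self_eq_one_of_a_eq_zero ha])
  rw [h] at this
  omega

theorem semiconjBy_inv_iff {x y : SuzukiA n θ} :
    SemiconjBy y x x⁻¹ ↔ y.a * θ x.a + x.a * θ y.a = x.a * θ x.a := by
  change (⟨y.a + x.a, y.b + x.b + y.a * θ x.a⟩ : SuzukiA n θ) =
    ⟨x.a + y.a, x.b + x.a * θ x.a + y.b + x.a * θ y.a⟩ ↔ _
  have h2 := CharTwo.two_eq_zero (R := Fq n)
  rw [SuzukiA.mk.injEq, add_comm y.a, eq_self, true_and]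
  constructor <;> intro h
  · linear_combination h + x.a * θ y.a * h2
  · linear_combination h - x.a * θ y.a * h2

theorem exists_apply_eq_add_one_of_isConj_inv {x : SuzukiA n θ} (hx : x.a ≠ 0)
    (h : IsConj x x⁻¹) : ∃ t, θ t = t + 1 := by
  obtain ⟨u, hu⟩ := h
  set y : SuzukiA n θ := ↑u
  have hrel := semiconjBy_inv_iff.mp hu
  have hθx : θ x.a ≠ 0 := by simpa using hx
  refine ⟨y.a / x.a, ?_⟩
  rw [map_div₀]
  field_simp
  linear_combination hrel - θ x.a * y.a * CharTwo.two_eq_zero (R := Fq n)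

end SuzukiA

open SuzukiA in
theorem stmt11_general (n : ℕ) (hodd : Odd n) (θ : Fq n ≃+* Fq n) :
    ∀ x : SuzukiA n θ, orderOf x = 4 → ¬ IsConj x x⁻¹ := by
  intro x hx hconj
  obtain ⟨t, ht⟩ := exists_apply_eq_add_one_of_isConj_inv (a_ne_zero_of_orderOf_eq_four hx) hconj
  have h2 : 2 ∣ n := (CharP.cast_eq_zero_iff (Fq n) 2 n).mp <|
    θ.natCast_eq_zero_of_apply_eq_add_one ht (GaloisField.ringEquiv_pow_eq_one hodd.pos.ne' θ)
  exact Nat.not_even_iff_odd.mpr hodd (even_iff_two_dvd.mpr h2)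

open SuzukiA in
theorem stmt11 (n : ℕ) (hn : 1 < n) (hodd : Odd n) (θ : Fq n ≃+* Fq n)
    (hθ : ∀ σ : Fq n ≃+* Fq n, σ ∈ Subgroup.zpowers θ) :
    ∀ x : SuzukiA n θ, orderOf x = 4 → ¬ IsConj x x⁻¹ :=
  stmt11_general n hodd θ
end
end
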